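/- Let L be an even unimodular lattice, let M0 ⊆ L be a primitive sublattice, and let L2 = L ⊕ ℤe be the orthogonal direct sum with (e,e) = -2; set M = M0 ⊕ ℤe ⊆ L2. Suppose δ = d + a·e with d ∈ M0 and a ∈ ℤ satisfies either (i) (δ,δ) = -2, or (ii) (δ,δ) = -10 and (δ,x) ∈ 2ℤ for all x ∈ L2. Then at least one of the following holds: (1) (d,d) ≥ 0; (2) (d,d) = -2; (3) there exists d' ∈ M0 with 2d' = d and (d',d') = -2. -/

import Mathlib

/-!
If `(δ,δ) = -2` then `(d,d) = 2a² - 2`, which is `-2` or nonnegative. In the `-10` case, taking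
`b = 0` shows `(d,·)` is even; by unimodularity every functional on `L` is even at `d`, so
`d = 2d'`, and `d' ∈ M0` by primitivity. Then `4(d',d') = 2a² - 10`: if `a² ≥ 5` this is
nonnegative, and among `|a| ≤ 2` only `a = ±1` makes `2a² - 10` divisible by `4`, giving
`(d',d') = -2`.
-/

theorem Module.Free.exists_smul_eq_of_forall_dvd {R M : Type*} [CommRing R] [AddCommGroup M]
    [Module R M] [Module.Free R M] {n : R} {x : M} (h : ∀ f : M →ₗ[R] R, n ∣ f x) :
    ∃ y : M, n • y = x := by
  let b := Module.Free.chooseBasis R M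
  choose e he using fun i => h (b.coord i)
  refine ⟨∑ i ∈ (b.repr x).support, e i • b i, ?_⟩
  conv_rhs => rw [← b.linearCombination_repr x, Finsupp.linearCombination_apply, Finsupp.sum]
  simp only [Finset.smul_sum, smul_smul, ← he, Module.Basis.coord_apply]

theorem Int.nonneg_or_eq_neg_two_of_sub_two_mul_self {n a : ℤ} (h : n - 2 * a * a = -2) :
    0 ≤ n ∨ n = -2 := by
  rcases eq_or_ne a 0 with rfl | ha
  · right; linarith
  · left; nlinarith [Int.one_le_abs ha, abs_mul_abs_self a]

theorem Int.nonneg_or_eq_neg_two_of_four_mul_sub_two_mul_self {q a : ℤ}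
    (h : 4 * q - 2 * a * a = -10) : 0 ≤ q ∨ q = -2 := by
  rcases le_or_gt (a * a) 4 with ha | ha
  · obtain ⟨ha₁, ha₂⟩ : -2 ≤ a ∧ a ≤ 2 := ⟨by nlinarith, by nlinarith⟩
    interval_cases a <;> omega
  · left; nlinarith

theorem lemma_2_8_general
    {L : Type*} [AddCommGroup L] [Module ℤ L] [Module.Free ℤ L]
    (B : L →ₗ[ℤ] L →ₗ[ℤ] ℤ)
    (hsymm : ∀ x y : L, B x y = B y x)
    (hunimod : Function.Bijective (fun x : L => B x))
    (M0 : Submodule ℤ L)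
    (hprim : ∀ (x : L) (n : ℤ), n ≠ 0 → n • x ∈ M0 → x ∈ M0)
    (d : L) (hd : d ∈ M0) (a : ℤ)
    (hδ : (B d d - 2 * a * a = -2) ∨
          (B d d - 2 * a * a = -10 ∧ ∀ (y : L) (b : ℤ), 2 ∣ (B d y - 2 * a * b))) :
    0 ≤ B d d ∨ B d d = -2 ∨ ∃ d' ∈ M0, 2 • d' = d ∧ B d' d' = -2 := by
  rcases hδ with h | ⟨h, hdiv⟩
  · exact (Int.nonneg_or_eq_neg_two_of_sub_two_mul_self h).imp_right Or.inl
  have hfunctional : ∀ f : L →ₗ[ℤ] ℤ, 2 ∣ f d := by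
    intro f
    obtain ⟨y, rfl⟩ := hunimod.2 f
    simpa [hsymm y d] using hdiv y 0
  obtain ⟨d', rfl⟩ := Module.Free.exists_smul_eq_of_forall_dvd hfunctional
  rw [two_smul] at hd h ⊢
  have hd' : d' ∈ M0 := hprim d' 2 two_ne_zero (by rwa [two_zsmul])
  have hq : 4 * B d' d' - 2 * a * a = -10 := by
    simp only [map_add, LinearMap.add_apply] at h
    linarith
  rcases Int.nonneg_or_eq_neg_two_of_four_mul_sub_two_mul_self hq with hnonneg | hneg
  · left
    simp only [map_add, LinearMap.add_apply]
    linarith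
  · exact Or.inr (Or.inr ⟨d', hd', two_nsmul d', hneg⟩)

/-- Lemma 2.8 of the paper, abstract form.
`L` is an even unimodular lattice (finitely generated free ℤ-module with a
nondegenerate — here even bijective, i.e. unimodular — integral symmetric
bilinear form `B`).  `M0 ⊆ L` is a primitive sublattice (the quotient is
torsion-free).  The lattice `L2 = L ⊕ ℤe` with `(e,e) = -2` has bilinear form
`B2((x,s),(y,t)) = B x y - 2*s*t`, so for `δ = d + a·e` we have
`(δ,δ) = B d d - 2*a*a` and `(δ, y + b·e) = B d y - 2*a*b`.
If `(δ,δ) = -2`, or `(δ,δ) = -10` and `(δ,x) ∈ 2ℤ` for all `x ∈ L2`, then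
`(d,d) ≥ 0`, or `(d,d) = -2`, or `d = 2d'` with `d' ∈ M0` and `(d',d') = -2`. -/
theorem lemma_2_8
    {L : Type*} [AddCommGroup L] [Module ℤ L] [Module.Free ℤ L] [Module.Finite ℤ L]
    (B : L →ₗ[ℤ] L →ₗ[ℤ] ℤ)
    (hsymm : ∀ x y : L, B x y = B y x)
    (hunimod : Function.Bijective (fun x : L => B x))
    (heven : ∀ x : L, 2 ∣ B x x)
    (M0 : Submodule ℤ L)
    (hprim : ∀ (x : L) (n : ℤ), n ≠ 0 → n • x ∈ M0 → x ∈ M0)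
    (d : L) (hd : d ∈ M0) (a : ℤ)
    (hδ : (B d d - 2 * a * a = -2) ∨
          (B d d - 2 * a * a = -10 ∧ ∀ (y : L) (b : ℤ), 2 ∣ (B d y - 2 * a * b))) :
    0 ≤ B d d ∨ B d d = -2 ∨ ∃ d' ∈ M0, 2 • d' = d ∧ B d' d' = -2 :=
  lemma_2_8_general B hsymm hunimod M0 hprim d hd a hδ
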